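/- arXiv:2008.04772 — 2 statements merged into one kernel-verified Lean document; each statement's English description precedes it below -/
import Mathlib

section
/- Let X be a complex Banach space and let S, C : X →L[ℂ] X satisfy the Calderón identities S∘S = -(1/4)•id + C∘C and C∘S + S∘C = 0, and let α ∈ ℂ be nonzero. Then the PMCHWT-type block operator A_α on X × X (defined by A_α(u,v) = (C u + α • S v, -(α⁻¹) • S u + C v)) is invertible with inverse 4 • A_α, and its spectrum is contained in the two-point set {1/2, -1/2}. -/
/-!
The Calderón identities make `A_α` square to `(1/4) • id`: the diagonal blocks of `A_α²` are
`C² - S² = 1/4` and the off-diagonal ones are multiples of `CS + SC = 0` (the factors `α`, `α⁻¹`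
cancel on the diagonal). Hence `4 • A_α` is a two-sided inverse, and by spectral mapping for
`λ ↦ λ²` every point of the spectrum satisfies `λ² = 1/4`.
-/

theorem spectrum_subset_pair_of_mul_self_eq_algebraMap {𝕜 A : Type*} [Field 𝕜] [Ring A]
    [Algebra 𝕜 A] {a : A} {b : 𝕜} (h : a * a = algebraMap 𝕜 A (b ^ 2)) :
    spectrum 𝕜 a ⊆ {b, -b} := by
  intro μ hμ
  rcases subsingleton_or_nontrivial A with _ | _
  · simp [spectrum.of_subsingleton] at hμ
  have hμ2 : μ ^ 2 ∈ spectrum 𝕜 (algebraMap 𝕜 A (b ^ 2)) := by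
    rw [← h, ← sq]
    exact spectrum.pow_mem_pow a 2 hμ
  rwa [spectrum.scalar_eq, Set.mem_singleton_iff, sq_eq_sq_iff_eq_or_eq_neg] at hμ2

section Calderon

variable {𝕜 X : Type*} [Field 𝕜] [TopologicalSpace X] [AddCommGroup X] [Module 𝕜 X]
  [IsTopologicalAddGroup X] [ContinuousConstSMul 𝕜 X]
  {S C : X →L[𝕜] X} {c α : 𝕜} {A : (X × X) →L[𝕜] (X × X)}

theorem calderon_block_comp_self (hS : S.comp S = -c • ContinuousLinearMap.id 𝕜 X + C.comp C)
    (hC : C.comp S + S.comp C = 0) (hα : α ≠ 0)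
    (hA : ∀ u v : X, A (u, v) = (C u + α • S v, -(α⁻¹) • S u + C v)) :
    A.comp A = c • ContinuousLinearMap.id 𝕜 (X × X) := by
  have hSS (u : X) : S (S u) = -c • u + C (C u) := by
    simpa using congr($hS u)
  have hCS (u : X) : C (S u) = -S (C u) :=
    eq_neg_of_add_eq_zero_left (by simpa using congr($hC u))
  refine ContinuousLinearMap.ext fun ⟨u, v⟩ => ?_
  simp only [ContinuousLinearMap.comp_apply, hA, map_add, map_smul, hSS, hCS,
    smul_apply, ContinuousLinearMap.id_apply, Prod.smul_mk, Prod.mk.injEq]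
  constructor <;> match_scalars <;> field_simp <;> ring

end Calderon

theorem pmchwt_block_invertible_and_spectrum_general
    (X : Type*) [NormedAddCommGroup X] [NormedSpace ℂ X]
    (S C : X →L[ℂ] X)
    (hS : S.comp S = -(1/4 : ℂ) • ContinuousLinearMap.id ℂ X + C.comp C)
    (hC : C.comp S + S.comp C = 0)
    (α : ℂ) (hα : α ≠ 0)
    (A : (X × X) →L[ℂ] (X × X))
    (hA : ∀ u v : X, A (u, v) = (C u + α • S v, -(α⁻¹) • S u + C v)) :
    A.comp ((4 : ℂ) • A) = ContinuousLinearMap.id ℂ (X × X) ∧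
    ((4 : ℂ) • A).comp A = ContinuousLinearMap.id ℂ (X × X) ∧
    spectrum ℂ A ⊆ {(1/2 : ℂ), -(1/2 : ℂ)} := by
  have hAA := calderon_block_comp_self hS hC hα hA
  refine ⟨?_, ?_, spectrum_subset_pair_of_mul_self_eq_algebraMap ?_⟩
  · rw [ContinuousLinearMap.comp_smul, hAA, smul_smul]
    norm_num
  · rw [ContinuousLinearMap.smul_comp, hAA, smul_smul]
    norm_num
  · rw [Algebra.algebraMap_eq_smul_one]
    norm_num
    exact hAA

/-- Under the Calderón identities, the PMCHWT-type block operator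
`A (u, v) = (C u + α • S v, -(α⁻¹) • S u + C v)` is invertible with inverse `4 • A`,
and its spectrum is contained in `{1/2, -1/2}`. -/
theorem pmchwt_block_invertible_and_spectrum
    (X : Type*) [NormedAddCommGroup X] [NormedSpace ℂ X] [CompleteSpace X]
    (S C : X →L[ℂ] X)
    (hS : S.comp S = -(1/4 : ℂ) • ContinuousLinearMap.id ℂ X + C.comp C)
    (hC : C.comp S + S.comp C = 0)
    (α : ℂ) (hα : α ≠ 0)
    (A : (X × X) →L[ℂ] (X × X))
    (hA : ∀ u v : X, A (u, v) = (C u + α • S v, -(α⁻¹) • S u + C v)) :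
    A.comp ((4 : ℂ) • A) = ContinuousLinearMap.id ℂ (X × X) ∧
    ((4 : ℂ) • A).comp A = ContinuousLinearMap.id ℂ (X × X) ∧
    spectrum ℂ A ⊆ {(1/2 : ℂ), -(1/2 : ℂ)} :=
  pmchwt_block_invertible_and_spectrum_general X S C hS hC α hα A hA
end

section
/- Let X be a complex Banach space and let S, C : X →L[ℂ] X satisfy the Calderón identities S∘S = -(1/4)•id + C∘C and C∘S + S∘C = 0, and suppose in addition that C is a compact operator. Then for every nonzero α ∈ ℂ, the reduced (electric-field-only) block operator B_α on X × X defined by B_α(u,v) = (α • S v, -(α⁻¹) • S u) satisfies: B_α ∘ B_α - (1/4)•id is a compact operator on X × X. -/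
/-! `B ∘ B` acts diagonally as `-(S ∘ S)`, and the Calderón identity turns `-(S ∘ S) - 1/4`
into `-(C ∘ C)`, which is compact because `C` is. -/

theorem IsCompactOperator.prodMap {M₁ M₂ M₃ M₄ : Type*} [Zero M₁] [Zero M₃]
    [TopologicalSpace M₁] [TopologicalSpace M₂] [TopologicalSpace M₃] [TopologicalSpace M₄]
    {f : M₁ → M₂} {g : M₃ → M₄} (hf : IsCompactOperator f) (hg : IsCompactOperator g) :
    IsCompactOperator (Prod.map f g) := by
  obtain ⟨K₁, hK₁, hf⟩ := hf
  obtain ⟨K₂, hK₂, hg⟩ := hg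
  exact ⟨K₁ ×ˢ K₂, hK₁.prod hK₂, prod_mem_nhds hf hg⟩

theorem ContinuousLinearMap.comp_self_eq_prodMap_neg_comp_self {𝕜 M : Type*} [Field 𝕜]
    [AddCommGroup M] [Module 𝕜 M] [TopologicalSpace M] [IsTopologicalAddGroup M] {S : M →L[𝕜] M} {α : 𝕜} (hα : α ≠ 0)
    {B : M × M →L[𝕜] M × M} (hB : ∀ u v : M, B (u, v) = (α • S v, -α⁻¹ • S u)) :
    B.comp B = (-S.comp S).prodMap (-S.comp S) := by
  ext u <;> simp [hB, smul_smul, hα]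

theorem reduced_block_square_compact_perturbation_general
    (X : Type*) [NormedAddCommGroup X] [NormedSpace ℂ X]
    (S C : X →L[ℂ] X)
    (hS : S.comp S = -(1/4 : ℂ) • ContinuousLinearMap.id ℂ X + C.comp C)
    (hCcompact : IsCompactOperator (⇑C))
    (α : ℂ) (hα : α ≠ 0)
    (B : (X × X) →L[ℂ] (X × X))
    (hB : ∀ u v : X, B (u, v) = (α • S v, -(α⁻¹) • S u)) :
    IsCompactOperator (⇑(B.comp B - (1/4 : ℂ) • ContinuousLinearMap.id ℂ (X × X))) := by
  have hCC : IsCompactOperator (⇑(-C.comp C)) := (hCcompact.clm_comp C).neg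
  have hBB : ⇑(B.comp B - (1/4 : ℂ) • ContinuousLinearMap.id ℂ (X × X)) =
      Prod.map (-C.comp C) (-C.comp C) := by
    ext ⟨u, v⟩ <;> simp [ContinuousLinearMap.comp_self_eq_prodMap_neg_comp_self hα hB, hS]
  rw [hBB]
  exact hCC.prodMap hCC

/-- Under the Calderón identities with `C` compact, the reduced
(electric-field-only) block operator `B (u, v) = (α • S v, -(α⁻¹) • S u)` satisfies
that `B ∘ B - (1/4) • id` is a compact operator on `X × X`. -/
theorem reduced_block_square_compact_perturbation
    (X : Type*) [NormedAddCommGroup X] [NormedSpace ℂ X] [CompleteSpace X]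
    (S C : X →L[ℂ] X)
    (hS : S.comp S = -(1/4 : ℂ) • ContinuousLinearMap.id ℂ X + C.comp C)
    (hC : C.comp S + S.comp C = 0)
    (hCcompact : IsCompactOperator (⇑C))
    (α : ℂ) (hα : α ≠ 0)
    (B : (X × X) →L[ℂ] (X × X))
    (hB : ∀ u v : X, B (u, v) = (α • S v, -(α⁻¹) • S u)) :
    IsCompactOperator (⇑(B.comp B - (1/4 : ℂ) • ContinuousLinearMap.id ℂ (X × X))) :=
  reduced_block_square_compact_perturbation_general X S C hS hCcompact α hα B hB
end
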